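/- arXiv:2401.12446 — 3 statements merged into one kernel-verified Lean document; each statement's English description precedes it below -/
import Mathlib

section
/- Let I be a proper nonzero monomial ideal of S = K[x_1,…,x_n]. Then for every integer s ≥ 1 and every vector a ∈ ℕ^n with |a| ≤ γ(I)·s − 1, one has √(I^s : x^a) = √I; in particular (I^s : x^a) ⊆ √I. -/
open MvPolynomial

/-! Setting: `K` a field, `S = K[x_1, …, x_n]` realized as `MvPolynomial (Fin n) K`. -/

/-- `I` is a monomial ideal: an ideal generated by monomials. -/
def IsMonomialIdeal {K : Type} [Field K] {n : ℕ} (I : Ideal (MvPolynomial (Fin n) K)) : Prop :=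
  ∃ A : Set (Fin n →₀ ℕ), I = Ideal.span ((fun a => (monomial a (1 : K))) '' A)

/-- `I` is a squarefree monomial ideal: an ideal generated by squarefree monomials. -/
def IsSquarefreeMonomialIdeal {K : Type} [Field K] {n : ℕ}
    (I : Ideal (MvPolynomial (Fin n) K)) : Prop :=
  ∃ A : Set (Fin n →₀ ℕ), (∀ a ∈ A, ∀ i, a i ≤ 1) ∧
    I = Ideal.span ((fun a => (monomial a (1 : K))) '' A)

/-- Exponent vectors of the minimal monomial generators `G(I)` of a monomial ideal `I`:
monomials of `I` none of whose proper monomial divisors lies in `I`. -/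
def minGens {K : Type} [Field K] {n : ℕ} (I : Ideal (MvPolynomial (Fin n) K)) :
    Set (Fin n →₀ ℕ) :=
  {a | monomial a (1 : K) ∈ I ∧ ∀ b : Fin n →₀ ℕ, b ≤ a → b ≠ a → monomial b (1 : K) ∉ I}

/-- `γ(I) = min{deg_{x_j}(u) : 1 ≤ j ≤ n, u ∈ G(I), x_j ∣ u}`. -/
noncomputable def gammaI {K : Type} [Field K] {n : ℕ}
    (I : Ideal (MvPolynomial (Fin n) K)) : ℕ :=
  sInf {d | ∃ a ∈ minGens I, ∃ j : Fin n, a j ≠ 0 ∧ a j = d}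

/-- The `m`-th symbolic power `I^(m) = ⋂_{p ∈ Min(I)} Ker(S → (S/I^m)_p)`; the kernel of
`S → (S/I^m)_p` is the contraction of `I^m S_p` from the localization `S_p`. -/
noncomputable def symbolicPower {K : Type} [Field K] {n : ℕ}
    (I : Ideal (MvPolynomial (Fin n) K)) (m : ℕ) : Ideal (MvPolynomial (Fin n) K) :=
  ⨅ (p : Ideal (MvPolynomial (Fin n) K)) (hp : p ∈ I.minimalPrimes),
    Ideal.comap (algebraMap (MvPolynomial (Fin n) K)
        (Localization (@Ideal.primeCompl _ _ p hp.1.1)))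
      ((I ^ m).map (algebraMap (MvPolynomial (Fin n) K)
        (Localization (@Ideal.primeCompl _ _ p hp.1.1))))

/-- The integral closure of an ideal `I`: the (ideal generated by the) set of elements `f`
satisfying an equation `f^k + c_1 f^(k-1) + ⋯ + c_k = 0` with `c_i ∈ I^i`.  (This set is
already an ideal, so taking the span is harmless.) -/
noncomputable def intCl {K : Type} [Field K] {n : ℕ} (I : Ideal (MvPolynomial (Fin n) K)) :
    Ideal (MvPolynomial (Fin n) K) :=
  Ideal.span {f | ∃ k : ℕ, 1 ≤ k ∧ ∃ c : ℕ → MvPolynomial (Fin n) K,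
    (∀ i ∈ Finset.Icc 1 k, c i ∈ I ^ i) ∧
    f ^ k + ∑ i ∈ Finset.Icc 1 k, c i * f ^ (k - i) = 0}

/-- The analytic spread `ℓ(I)`: the Krull dimension of `R(I)/m R(I)`, where `R(I) ⊆ S[t]`
is the Rees algebra of `I` and `m = (x_1, …, x_n)`. -/
noncomputable def analyticSpread {K : Type} [Field K] {n : ℕ}
    (I : Ideal (MvPolynomial (Fin n) K)) : ℕ :=
  ENat.toNat (WithBot.unbotD 0 (ringKrullDim ((reesAlgebra I) ⧸
    (Ideal.map (algebraMap (MvPolynomial (Fin n) K) (reesAlgebra I))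
      (Ideal.span (Set.range (X : Fin n → MvPolynomial (Fin n) K)))))))

/-- The height of an ideal `I`: the minimal height of a prime containing `I`. -/
noncomputable def idealHeight {K : Type} [Field K] {n : ℕ}
    (I : Ideal (MvPolynomial (Fin n) K)) : ℕ :=
  ENat.toNat (⨅ (p : PrimeSpectrum (MvPolynomial (Fin n) K)) (_ : I ≤ p.asIdeal),
    Order.height p)

/-! Castelnuovo–Mumford regularity via graded Betti numbers.  For a graded module
`M = I/J` (with `I`, `J` homogeneous ideals, `J ⊆ I`; take `J = ⊥` for `M = I`),
`β_{i,j}(M) = dim_K Tor_i^S(M, K)_j`, and `Tor_i^S(M, K)` is computed as the `i`-th homology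
of `M ⊗_S K_•(x_1, …, x_n)`, the Koszul complex. The degree-`j` strand of
`M ⊗ K_i` is `⊕_{T ⊆ [n], |T| = i} M_{j-i} · e_T`; we encode its elements as functions
from `Finset (Fin n)` to `S`, supported on the `i`-element subsets, with values homogeneous
of degree `j - i` lying in `I` (taken modulo componentwise membership in `J`). -/

/-- The Koszul differential `e_T ⊗ f ↦ ∑_{t ∈ T} (-1)^{|{u ∈ T : u < t}|} e_{T∖{t}} ⊗ x_t f`,
written for chains `c : Finset (Fin n) → S`. -/
noncomputable def koszulD {K : Type} [Field K] {n : ℕ}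
    (c : Finset (Fin n) → MvPolynomial (Fin n) K) :
    Finset (Fin n) → MvPolynomial (Fin n) K :=
  fun T => ∑ t ∈ Tᶜ, ((-1 : K) ^ (T.filter (fun u => u < t)).card) • (X t * c (insert t T))

/-- A chain of the degree-`j` strand of `I ⊗ K_i`: supported on `i`-element subsets, with
values in `I` homogeneous of degree `j - i`. -/
def IsKoszulChain {K : Type} [Field K] {n : ℕ} (I : Ideal (MvPolynomial (Fin n) K))
    (i j : ℕ) (c : Finset (Fin n) → MvPolynomial (Fin n) K) : Prop :=
  (∀ T : Finset (Fin n), T.card = i →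
      c T ∈ I ∧ c T ∈ homogeneousSubmodule (Fin n) K (j - i)) ∧
  (∀ T : Finset (Fin n), T.card ≠ i → c T = 0)

/-- `β_{i,j}(I/J) ≠ 0`: the degree-`j` strand of the Koszul homology
`Tor_i((I/J), K)` is nonzero, i.e. there is a cycle (modulo `J`) which is not a
boundary (modulo `J`). -/
def BettiNonzero {K : Type} [Field K] {n : ℕ} (I J : Ideal (MvPolynomial (Fin n) K))
    (i j : ℕ) : Prop :=
  ∃ c : Finset (Fin n) → MvPolynomial (Fin n) K,
    IsKoszulChain I i j c ∧ (∀ T, koszulD c T ∈ J) ∧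
      ¬ ∃ b : Finset (Fin n) → MvPolynomial (Fin n) K,
          IsKoszulChain I (i + 1) j b ∧ ∀ T, c T - koszulD b T ∈ J

/-- The Castelnuovo–Mumford regularity `reg(I/J) = max{j - i : β_{i,j}(I/J) ≠ 0}` of the
graded module `I/J` (use `J = ⊥` for the module `I` itself), with `reg 0 = ⊥ = -∞`. -/
noncomputable def cmReg {K : Type} [Field K] {n : ℕ}
    (I J : Ideal (MvPolynomial (Fin n) K)) : WithBot ℤ :=
  sSup {r : WithBot ℤ | ∃ i j : ℕ, BettiNonzero I J i j ∧ r = ((j : ℤ) - (i : ℤ) : ℤ)}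

/-!
If `f · xᵃ ∈ Iˢ`, every monomial `xᵐ` of `f` gives `xᵐ⁺ᵃ ∈ Iˢ`, so `xᵐ⁺ᵃ` is divisible by a
product `u₁ ⋯ uₛ` of minimal generators of `I`. Were every `uₖ` to involve a variable missing from
`xᵐ`, that variable would occur in `uₖ` with exponent at least `γ(I)` and its whole exponent in
`u₁ ⋯ uₛ` would come from `xᵃ`, forcing `|a| ≥ γ(I) · s`. Hence some `uₖ` only involves variables
of `xᵐ`, so `xᵐ ∈ √I`. The reverse inclusion holds because `Iˢ ⊆ (Iˢ : xᵃ)` and `√(Iˢ) = √I`.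
-/

namespace MvPolynomial

variable {σ R : Type*} [CommSemiring R]

theorem span_monomial_pow_le (A : Set (σ →₀ ℕ)) (s : ℕ) :
    Ideal.span ((fun a => monomial a (1 : R)) '' A) ^ s ≤
      Ideal.span ((fun b => monomial b (1 : R)) ''
        {b | ∃ g : Fin s → A, ∑ k, (g k : σ →₀ ℕ) = b}) := by
  rw [Ideal.span, Submodule.span_pow]
  refine Submodule.span_mono fun x hx => ?_
  obtain ⟨f, rfl⟩ := Set.mem_pow.mp hx
  choose g hgA hg using fun k => (f k).2
  refine ⟨∑ k, g k, ⟨fun k => ⟨g k, hgA k⟩, rfl⟩, ?_⟩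
  simp only [List.prod_ofFn, ← hg, monomial_sum_one]

theorem mem_of_forall_monomial_mem {J : Ideal (MvPolynomial σ R)} {f : MvPolynomial σ R}
    (hf : ∀ m ∈ f.support, monomial m 1 ∈ J) : f ∈ J := by
  rw [f.as_sum]
  refine J.sum_mem fun m hm => ?_
  rw [← mul_one (coeff m f), ← C_mul_monomial]
  exact J.mul_mem_left _ (hf m hm)

theorem monomial_mem_radical_of_support_subset {J : Ideal (MvPolynomial σ R)} {b m : σ →₀ ℕ}
    (hb : monomial b 1 ∈ J) (hbm : b.support ⊆ m.support) : monomial m 1 ∈ J.radical := by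
  have hle : b ≤ b.degree • m := fun j => by
    by_cases hj : b j = 0
    · simp [hj]
    · have hmj : 1 ≤ m j := Nat.one_le_iff_ne_zero.mpr
        (Finsupp.mem_support_iff.mp (hbm (Finsupp.mem_support_iff.mpr hj)))
      calc b j ≤ b.degree := Finsupp.le_degree j b
        _ ≤ b.degree * m j := Nat.le_mul_of_pos_right _ hmj
  refine ⟨b.degree, ?_⟩
  rw [monomial_pow, one_pow, ← add_tsub_cancel_of_le hle, ← one_mul (1 : R), ← monomial_mul]
  exact J.mul_mem_right _ hb

end MvPolynomial

theorem Finsupp.exists_support_subset_of_sum_le {κ ι : Type*} [Fintype κ] [Fintype ι]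
    {g : κ → ι →₀ ℕ} {m a : ι →₀ ℕ} {γ : ℕ} (hγ : ∀ k j, g k j ≠ 0 → γ ≤ g k j)
    (hle : ∑ k, g k ≤ m + a) (ha : ∑ j, a j < γ * Fintype.card κ) :
    ∃ k, (g k).support ⊆ m.support := by
  classical
  by_contra! h
  choose j hj hjm using fun k => Finset.not_subset.mp (h k)
  simp only [Finsupp.mem_support_iff, ne_eq, not_not] at hj hjm
  set Z := Finset.univ.filter fun i => m i = 0
  have : γ * Fintype.card κ ≤ ∑ j, a j :=
    calc γ * Fintype.card κ = ∑ _k : κ, γ := by simp [mul_comm]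
      _ ≤ ∑ k, g k (j k) := Finset.sum_le_sum fun k _ => hγ k (j k) (hj k)
      _ ≤ ∑ k, ∑ i ∈ Z, g k i := Finset.sum_le_sum fun k _ =>
          Finset.single_le_sum (f := g k) (fun _ _ => Nat.zero_le _) (by simp [Z, hjm k])
      _ = ∑ i ∈ Z, (∑ k, g k) i := by
          rw [Finset.sum_comm]; simp only [Finsupp.finsetSum_apply]
      _ ≤ ∑ i ∈ Z, a i := Finset.sum_le_sum fun i hi => by
          simpa [(Finset.mem_filter.mp hi).2] using hle i
      _ ≤ ∑ i, a i := Finset.sum_le_sum_of_subset (Finset.filter_subset _ _)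
  omega

section MonomialIdeal

variable {K : Type} [Field K] {n : ℕ}

theorem exists_mem_minGens_le {I : Ideal (MvPolynomial (Fin n) K)} {c : Fin n →₀ ℕ}
    (hc : monomial c (1 : K) ∈ I) : ∃ b ∈ minGens I, b ≤ c := by
  have hfin : {b | b ≤ c ∧ monomial b (1 : K) ∈ I}.Finite :=
    (Set.finite_Iic c).subset fun b hb => hb.1
  obtain ⟨b, hb, hmin⟩ := hfin.exists_minimal ⟨c, le_refl c, hc⟩
  refine ⟨b, ⟨hb.2, fun b' hb' hne hb'I => hne (le_antisymm hb' ?_)⟩, hb.1⟩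
  exact hmin ⟨hb'.trans hb.1, hb'I⟩ hb'

theorem gammaI_le {I : Ideal (MvPolynomial (Fin n) K)} {b : Fin n →₀ ℕ} (hb : b ∈ minGens I)
    {j : Fin n} (hj : b j ≠ 0) : gammaI I ≤ b j :=
  Nat.sInf_le ⟨b, hb, j, hj, rfl⟩

theorem IsMonomialIdeal.exists_minGens_sum_le {I : Ideal (MvPolynomial (Fin n) K)}
    (hI : IsMonomialIdeal I) {s : ℕ} {f : MvPolynomial (Fin n) K} (hf : f ∈ I ^ s)
    {c : Fin n →₀ ℕ} (hc : c ∈ f.support) :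
    ∃ g : Fin s → Fin n →₀ ℕ, (∀ k, g k ∈ minGens I) ∧ ∑ k, g k ≤ c := by
  obtain ⟨A, hA⟩ := hI
  rw [hA] at hf
  obtain ⟨_, ⟨g, rfl⟩, hgc⟩ :=
    mem_ideal_span_monomial_image.mp (span_monomial_pow_le A s hf) c hc
  have hgI : ∀ k, monomial (g k : Fin n →₀ ℕ) (1 : K) ∈ I := fun k => by
    rw [hA]; exact Ideal.subset_span ⟨g k, (g k).2, rfl⟩
  choose h hmin hle using fun k => exists_mem_minGens_le (hgI k)
  exact ⟨h, hmin, (Finset.sum_le_sum fun k _ => hle k).trans hgc⟩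

theorem IsMonomialIdeal.colon_monomial_le_radical {I : Ideal (MvPolynomial (Fin n) K)}
    (hI : IsMonomialIdeal I) {s : ℕ} {a : Fin n →₀ ℕ} (ha : ∑ j, a j < gammaI I * s) :
    (I ^ s).colon (Ideal.span {monomial a (1 : K)}) ≤ I.radical := by
  intro f hf
  rw [Ideal.mem_colon_span_singleton] at hf
  refine mem_of_forall_monomial_mem fun m hm => ?_
  have hma : m + a ∈ (f * monomial a 1).support := by
    rwa [mem_support_iff, coeff_mul_monomial, mul_one, ← mem_support_iff]
  obtain ⟨g, hg, hgle⟩ := hI.exists_minGens_sum_le hf hma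
  obtain ⟨k, hk⟩ := Finsupp.exists_support_subset_of_sum_le
    (fun k _ hj => gammaI_le (hg k) hj) hgle (by simpa using ha)
  exact monomial_mem_radical_of_support_subset (hg k).1 hk

end MonomialIdeal

theorem radical_colon_pow_eq_general {K : Type} [Field K] {n : ℕ}
    (I : Ideal (MvPolynomial (Fin n) K))
    (hmon : IsMonomialIdeal I)
    (s : ℕ) (hs : 1 ≤ s) (a : Fin n →₀ ℕ)
    (ha : (∑ i, (a i : ℤ)) ≤ (gammaI I : ℤ) * (s : ℤ) - 1) :
    Ideal.radical ((I ^ s).colon (Ideal.span {monomial a (1 : K)})) = Ideal.radical I ∧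
      (I ^ s).colon (Ideal.span {monomial a (1 : K)}) ≤ Ideal.radical I := by
  have hcolon : (I ^ s).colon (Ideal.span {monomial a (1 : K)}) ≤ I.radical :=
    hmon.colon_monomial_le_radical (by zify; omega)
  have hpow : I ^ s ≤ (I ^ s).colon (Ideal.span {monomial a (1 : K)}) := fun f hf =>
    Ideal.mem_colon_span_singleton.mpr (Ideal.mul_mem_right _ _ hf)
  refine ⟨le_antisymm (Ideal.radical_le_radical_iff.mpr hcolon) ?_, hcolon⟩
  rw [← Ideal.radical_pow (I := I) (Nat.one_le_iff_ne_zero.mp hs)]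
  exact Ideal.radical_mono hpow

/-- For a proper nonzero monomial ideal `I`, an integer `s ≥ 1` and a
vector `a ∈ ℕ^n` with `|a| ≤ γ(I)·s - 1`, one has `√(Iˢ : xᵃ) = √I`; in particular
`(Iˢ : xᵃ) ⊆ √I`. -/
theorem radical_colon_pow_eq {K : Type} [Field K] {n : ℕ}
    (I : Ideal (MvPolynomial (Fin n) K))
    (hmon : IsMonomialIdeal I) (hbot : I ≠ ⊥) (htop : I ≠ ⊤)
    (s : ℕ) (hs : 1 ≤ s) (a : Fin n →₀ ℕ)
    (ha : (∑ i, (a i : ℤ)) ≤ (gammaI I : ℤ) * (s : ℤ) - 1) :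
    Ideal.radical ((I ^ s).colon (Ideal.span {monomial a (1 : K)})) = Ideal.radical I ∧
      (I ^ s).colon (Ideal.span {monomial a (1 : K)}) ≤ Ideal.radical I :=
  radical_colon_pow_eq_general I hmon s hs a ha
end

section
/- Let I be a nonzero proper squarefree monomial ideal of S = K[x_1,…,x_n], let m and k be positive integers, and let j be an integer with m − k ≤ j ≤ m. Then for every vector a ∈ ℕ^n, one has √(I^(m) : x^a) = √(I^(km+j) : x^{(k+1)a}). -/
open MvPolynomial

/-!
Write `P_F = (X i | i ∈ F)` and `ord_F` for the order of vanishing along `V(P_F)`. It is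
additive on products, so `P_F` is prime, and `g ∉ P_F`, `g xᵇ ∈ P_F^t` force
`t ≤ deg_F b := ∑_{i ∈ F} b i`. Every minimal prime `p` of a monomial ideal `I` is some `P_F`,
and if `I` is squarefree then `I S_p = P_F S_p`: for `i ∈ F` a generator of `I` avoiding
`P_{F \ {i}}` is `X i` times a monomial outside `p`. Hence the `p`-component of `I^(t)` is
`P_F^t`, and `√(I^(t) : xᵇ)` is the intersection of the minimal primes `P_F` of `I` with
`deg_F b < t`. For `s = deg_F a` one has `(k + 1) s < k m + j ↔ s < m`, so both radicals in the
theorem are the same intersection.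
-/

theorem Finsupp.weight_indicator_eq_zero_iff {σ : Type*} {F : Set σ} {b : σ →₀ ℕ} :
    weight (F.indicator 1) b = 0 ↔ ∀ i ∈ F, b i = 0 := by
  simp only [weight_apply, Finsupp.sum, Finset.sum_eq_zero_iff, mem_support_iff,
    smul_eq_mul, mul_eq_zero, Set.indicator_apply_eq_zero, Pi.one_apply, one_ne_zero, imp_false]
  grind

namespace MvPolynomial

variable {σ R : Type*} [CommRing R] {F : Set σ}

theorem monomial_one_mem_span_X_image_iff [Nontrivial R] {b : σ →₀ ℕ} :
    monomial b (1 : R) ∈ Ideal.span (X '' F) ↔ ∃ i ∈ F, b i ≠ 0 := by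
  classical
  simp [mem_ideal_span_X_image, support_monomial]

/-- The order of vanishing of `f` along the coordinate subspace `{X i = 0 | i ∈ F}`: the least
number of factors `X i` with `i ∈ F` in a monomial of `f`. -/
noncomputable def orderAlong (F : Set σ) (f : MvPolynomial σ R) : ℕ∞ :=
  (f : MvPowerSeries σ R).weightedOrder (F.indicator 1)

theorem orderAlong_monomial (b : σ →₀ ℕ) {r : R} (hr : r ≠ 0) :
    orderAlong F (monomial b r) = (Finsupp.weight (F.indicator 1) b : ℕ) := by
  rw [orderAlong, coe_monomial, MvPowerSeries.weightedOrder_monomial_of_ne_zero _ hr]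

theorem orderAlong_mul [IsDomain R] (f g : MvPolynomial σ R) :
    orderAlong F (f * g) = orderAlong F f + orderAlong F g := by
  rw [orderAlong, coe_mul, MvPowerSeries.weightedOrder_mul]; rfl

theorem min_orderAlong_le_add (f g : MvPolynomial σ R) :
    min (orderAlong F f) (orderAlong F g) ≤ orderAlong F (f + g) := by
  simp only [orderAlong, coe_add]; exact MvPowerSeries.min_weightedOrder_le_add _

theorem one_le_orderAlong_iff {f : MvPolynomial σ R} :
    1 ≤ orderAlong F f ↔ f ∈ Ideal.span (X '' F) := by
  rw [mem_ideal_span_X_image]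
  constructor
  · intro h m hm
    by_contra! hF
    exact mem_support_iff.mp hm (MvPowerSeries.coeff_eq_zero_of_lt_weightedOrder _
      (lt_of_lt_of_le (by simp [Finsupp.weight_indicator_eq_zero_iff.mpr hF]) h))
  · intro h
    refine MvPowerSeries.le_weightedOrder _ fun d hd => ?_
    rw [coeff_coe, ← notMem_support_iff]
    intro hm
    obtain ⟨i, hi, hdi⟩ := h d hm
    have hd0 : Finsupp.weight (F.indicator 1) d = 0 := by exact_mod_cast Order.lt_one_iff.mp hd
    exact hdi (Finsupp.weight_indicator_eq_zero_iff.mp hd0 i hi)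

theorem le_orderAlong_of_mem_pow [IsDomain R] {f : MvPolynomial σ R} {t : ℕ}
    (hf : f ∈ Ideal.span (X '' F) ^ t) : (t : ℕ∞) ≤ orderAlong F f := by
  induction t generalizing f with
  | zero => simp
  | succ t ih =>
    rw [pow_succ] at hf
    refine Submodule.mul_induction_on hf (fun g hg h hh => ?_) (fun g h hg hh => ?_)
    · rw [orderAlong_mul, Nat.cast_succ]
      exact add_le_add (ih hg) (one_le_orderAlong_iff.mpr hh)
    · exact (le_min hg hh).trans (min_orderAlong_le_add g h)

theorem isPrime_span_X_image [IsDomain R] (F : Set σ) :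
    (Ideal.span (X '' F : Set (MvPolynomial σ R))).IsPrime := by
  refine ⟨fun h => ?_, fun {f g} hfg => ?_⟩
  · have h1 := one_le_orderAlong_iff.mpr ((Ideal.eq_top_iff_one _).mp h)
    rw [← C_1, ← monomial_zero', orderAlong_monomial _ one_ne_zero] at h1
    simp at h1
  · simp only [← one_le_orderAlong_iff, orderAlong_mul] at hfg ⊢
    by_contra! h
    rw [Order.lt_one_iff.mp h.1, Order.lt_one_iff.mp h.2] at hfg
    simp at hfg

theorem orderAlong_eq_zero_iff [IsDomain R] {f : MvPolynomial σ R} :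
    orderAlong F f = 0 ↔ f ∉ Ideal.span (X '' F) := by
  rw [← one_le_orderAlong_iff, not_le, Order.lt_one_iff]

theorem le_weight_of_mul_monomial_mem_pow [IsDomain R] {g : MvPolynomial σ R}
    {b : σ →₀ ℕ} {t : ℕ} (hg : g ∉ Ideal.span (X '' F))
    (h : g * monomial b 1 ∈ Ideal.span (X '' F) ^ t) :
    t ≤ Finsupp.weight (F.indicator 1) b := by
  have := le_orderAlong_of_mem_pow h
  rwa [orderAlong_mul, orderAlong_eq_zero_iff.mpr hg, orderAlong_monomial _ one_ne_zero, zero_add,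
    Nat.cast_le] at this

theorem monomial_mem_span_X_image_pow {b : σ →₀ ℕ} {t : ℕ}
    (h : t ≤ Finsupp.weight (F.indicator 1) b) :
    monomial b (1 : R) ∈ Ideal.span (X '' F) ^ t := by
  induction t generalizing b with
  | zero => simp
  | succ t ih =>
    obtain ⟨i, hi, hbi⟩ : ∃ i ∈ F, b i ≠ 0 := by
      by_contra! h0
      rw [Finsupp.weight_indicator_eq_zero_iff.mpr h0] at h
      omega
    obtain ⟨c, rfl⟩ :=
      le_iff_exists_add'.mp (Finsupp.single_le_iff.mpr (Nat.one_le_iff_ne_zero.mpr hbi))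
    rw [map_add, Finsupp.weight_single, Set.indicator_of_mem hi, Pi.one_apply, smul_eq_mul,
      mul_one] at h
    rw [monomial_add_single, pow_one, pow_succ]
    exact Ideal.mul_mem_mul (ih (by omega)) (Ideal.subset_span ⟨i, hi, rfl⟩)

theorem exists_X_mem_of_monomial_mem {p : Ideal (MvPolynomial σ R)} [p.IsPrime] {a : σ →₀ ℕ}
    (h : monomial a (1 : R) ∈ p) : ∃ i, a i ≠ 0 ∧ X i ∈ p := by
  rw [monomial_eq, C_1, one_mul, Finsupp.prod] at h
  obtain ⟨i, hi, hXi⟩ := Ideal.IsPrime.prod_mem_iff.mp h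
  exact ⟨i, Finsupp.mem_support_iff.mp hi, Ideal.IsPrime.mem_of_pow_mem ‹_› _ hXi⟩

variable [IsDomain R] {A : Set (σ →₀ ℕ)} {p : Ideal (MvPolynomial σ R)}

theorem eq_span_X_image_of_mem_minimalPrimes
    (hp : p ∈ (Ideal.span ((monomial · (1 : R)) '' A)).minimalPrimes) :
    p = Ideal.span (X '' {i | X i ∈ p}) := by
  have : p.IsPrime := hp.1.1
  have hle : Ideal.span (X '' {i | X i ∈ p}) ≤ p :=
    Ideal.span_le.mpr (by rintro _ ⟨i, hi, rfl⟩; exact hi)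
  refine le_antisymm (hp.2 ⟨isPrime_span_X_image _, Ideal.span_le.mpr ?_⟩ hle) hle
  rintro _ ⟨a, ha, rfl⟩
  obtain ⟨i, hai, hXi⟩ :=
    exists_X_mem_of_monomial_mem (hp.1.2 (Ideal.subset_span ⟨a, ha, rfl⟩))
  exact monomial_one_mem_span_X_image_iff.mpr ⟨i, hXi, hai⟩

theorem exists_notMem_mul_X_mem_of_mem_minimalPrimes (hA : ∀ a ∈ A, ∀ i, a i ≤ 1)
    (hp : p ∈ (Ideal.span ((monomial · (1 : R)) '' A)).minimalPrimes) {i : σ} (hi : X i ∈ p) :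
    ∃ s ∉ p, s * X i ∈ Ideal.span ((monomial · (1 : R)) '' A) := by
  set F := {j | X j ∈ p}
  have hpF := eq_span_X_image_of_mem_minimalPrimes hp
  have hlt : Ideal.span (X '' (F \ {i})) ≤ p :=
    Ideal.span_le.mpr (by rintro _ ⟨j, hj, rfl⟩; exact hj.1)
  obtain ⟨a, ha, haF⟩ : ∃ a ∈ A, ∀ j ∈ F \ {i}, a j = 0 := by
    by_contra! h
    have hXi := hp.2 ⟨isPrime_span_X_image _, Ideal.span_le.mpr ?_⟩ hlt hi
    · change monomial (Finsupp.single i 1) (1 : R) ∈ _ at hXi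
      rw [monomial_one_mem_span_X_image_iff] at hXi
      obtain ⟨j, hj, hij⟩ := hXi
      exact hj.2 (Finsupp.single_apply_ne_zero.mp hij).1
    · rintro _ ⟨a, ha, rfl⟩
      exact monomial_one_mem_span_X_image_iff.mpr (h a ha)
  have hai : a i = 1 := by
    have hmem : monomial a (1 : R) ∈ Ideal.span (X '' F) :=
      hpF ▸ hp.1.2 (Ideal.subset_span ⟨a, ha, rfl⟩)
    obtain ⟨j, hj, haj⟩ := monomial_one_mem_span_X_image_iff.mp hmem
    obtain rfl : j = i := by_contra fun hji => haj (haF j ⟨hj, hji⟩)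
    exact le_antisymm (hA a ha j) (Nat.one_le_iff_ne_zero.mpr haj)
  obtain ⟨c, rfl⟩ := le_iff_exists_add'.mp (Finsupp.single_le_iff.mpr hai.ge)
  refine ⟨monomial c 1, fun hc => ?_, ?_⟩
  · rw [hpF, monomial_one_mem_span_X_image_iff] at hc
    obtain ⟨j, hj, hcj⟩ := hc
    by_cases hji : j = i
    · subst hji
      exact hcj (by simpa using hai)
    · exact hcj (by simpa [Ne.symm hji] using haF j ⟨hj, hji⟩)
  · rw [← pow_one (X i), ← monomial_add_single]
    exact Ideal.subset_span ⟨_, ha, rfl⟩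

theorem exists_notMem_mul_mem_pow_of_mem_pow (hA : ∀ a ∈ A, ∀ i, a i ≤ 1)
    (hp : p ∈ (Ideal.span ((monomial · (1 : R)) '' A)).minimalPrimes) {f : MvPolynomial σ R}
    {t : ℕ} (hf : f ∈ p ^ t) :
    ∃ s ∉ p, s * f ∈ Ideal.span ((monomial · (1 : R)) '' A) ^ t := by
  have : p.IsPrime := hp.1.1
  set φ := algebraMap (MvPolynomial σ R) (Localization.AtPrime p)
  have hpI : p ≤ (Ideal.map φ (Ideal.span ((monomial · (1 : R)) '' A))).comap φ := by
    refine (eq_span_X_image_of_mem_minimalPrimes hp).le.trans (Ideal.span_le.mpr ?_)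
    rintro _ ⟨i, hi, rfl⟩
    exact (IsLocalization.algebraMap_mem_map_algebraMap_iff p.primeCompl _ _ _).mpr
      (exists_notMem_mul_X_mem_of_mem_minimalPrimes hA hp hi)
  have := (Ideal.pow_right_mono hpI t).trans (Ideal.le_comap_pow _ t) hf
  rwa [Ideal.mem_comap, ← Ideal.map_pow,
    IsLocalization.algebraMap_mem_map_algebraMap_iff p.primeCompl] at this

end MvPolynomial

section SymbolicPower

variable {K : Type} [Field K] {n : ℕ}

theorem mem_symbolicPower_iff {I : Ideal (MvPolynomial (Fin n) K)} {m : ℕ}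
    {g : MvPolynomial (Fin n) K} :
    g ∈ symbolicPower I m ↔ ∀ p ∈ I.minimalPrimes, ∃ s ∉ p, s * g ∈ I ^ m := by
  simp only [symbolicPower, Submodule.mem_iInf, Ideal.mem_comap]
  refine forall₂_congr fun p hp => ?_
  have := hp.1.1
  exact IsLocalization.algebraMap_mem_map_algebraMap_iff p.primeCompl
    (Localization.AtPrime p) _ _

theorem radical_colon_symbolicPower_eq_iInf {I : Ideal (MvPolynomial (Fin n) K)}
    (hI : IsSquarefreeMonomialIdeal I) (t : ℕ) (b : Fin n →₀ ℕ) :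
    ((symbolicPower I t).colon (Ideal.span {monomial b (1 : K)})).radical =
      ⨅ (p) (_ : p ∈ I.minimalPrimes)
        (_ : Finsupp.weight ({i | X i ∈ p}.indicator 1) b < t), p := by
  obtain ⟨A, hA, rfl⟩ := hI
  apply le_antisymm
  · refine le_iInf₂ fun p hp => le_iInf fun hb => hp.1.1.radical_le_iff.mpr fun g hg => ?_
    rw [Submodule.mem_colon_span_singleton, smul_eq_mul, mem_symbolicPower_iff] at hg
    obtain ⟨s, hs, hsg⟩ := hg p hp
    by_contra hgp
    have hF := eq_span_X_image_of_mem_minimalPrimes hp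
    have hmem : s * g * monomial b 1 ∈ Ideal.span (X '' {i | X i ∈ p}) ^ t := by
      rw [← hF, mul_assoc]
      exact Ideal.pow_right_mono hp.1.2 t hsg
    exact hb.not_ge (le_weight_of_mul_monomial_mem_pow (hF ▸ hp.1.1.mul_notMem hs hgp) hmem)
  · intro g hg
    refine ⟨t, ?_⟩
    rw [Submodule.mem_colon_span_singleton, smul_eq_mul, mem_symbolicPower_iff]
    intro p hp
    by_cases hb : Finsupp.weight ({i | X i ∈ p}.indicator 1) b < t
    · have hgp : g ∈ p := by
        simp only [Submodule.mem_iInf] at hg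
        exact hg p hp hb
      obtain ⟨s, hs, h⟩ := exists_notMem_mul_mem_pow_of_mem_pow hA hp (Ideal.pow_mem_pow hgp t)
      exact ⟨s, hs, by rw [← mul_assoc]; exact Ideal.mul_mem_right _ _ h⟩
    · have hbp : monomial b (1 : K) ∈ p ^ t := by
        rw [eq_span_X_image_of_mem_minimalPrimes hp]
        exact monomial_mem_span_X_image_pow (not_lt.mp hb)
      obtain ⟨s, hs, h⟩ := exists_notMem_mul_mem_pow_of_mem_pow hA hp hbp
      exact ⟨s, hs, by rw [mul_left_comm]; exact Ideal.mul_mem_left _ _ h⟩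

end SymbolicPower

theorem succ_mul_lt_toNat_iff {m k s : ℕ} {j : ℤ} (hj1 : (m : ℤ) - k ≤ j) (hj2 : j ≤ m) :
    (k + 1) * s < ((k : ℤ) * m + j).toNat ↔ s < m := by
  rw [Int.lt_toNat]
  push_cast
  constructor
  · intro h
    by_contra! hs
    nlinarith
  · intro h
    have : (s : ℤ) + 1 ≤ m := by exact_mod_cast h
    nlinarith

theorem radical_colon_symbolicPower_eq_general {K : Type} [Field K] {n : ℕ}
    (I : Ideal (MvPolynomial (Fin n) K))
    (hsf : IsSquarefreeMonomialIdeal I)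
    (m k : ℕ)
    (j : ℤ) (hj1 : (m : ℤ) - (k : ℤ) ≤ j) (hj2 : j ≤ (m : ℤ))
    (a : Fin n →₀ ℕ) :
    Ideal.radical ((symbolicPower I m).colon (Ideal.span {monomial a (1 : K)})) =
      Ideal.radical ((symbolicPower I ((k * m + j).toNat)).colon
        (Ideal.span {monomial ((k + 1) • a) (1 : K)})) := by
  simp_rw [radical_colon_symbolicPower_eq_iInf hsf, map_nsmul, smul_eq_mul,
    succ_mul_lt_toNat_iff hj1 hj2]

/-- For a nonzero proper squarefree monomial ideal `I`, positive integers
`m, k`, an integer `j` with `m - k ≤ j ≤ m` and every `a ∈ ℕ^n`,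
`√(I^(m) : xᵃ) = √(I^(km+j) : x^{(k+1)a})`. -/
theorem radical_colon_symbolicPower_eq {K : Type} [Field K] {n : ℕ}
    (I : Ideal (MvPolynomial (Fin n) K))
    (hsf : IsSquarefreeMonomialIdeal I) (hbot : I ≠ ⊥) (htop : I ≠ ⊤)
    (m k : ℕ) (hm : 1 ≤ m) (hk : 1 ≤ k)
    (j : ℤ) (hj1 : (m : ℤ) - (k : ℤ) ≤ j) (hj2 : j ≤ (m : ℤ))
    (a : Fin n →₀ ℕ) :
    Ideal.radical ((symbolicPower I m).colon (Ideal.span {monomial a (1 : K)})) =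
      Ideal.radical ((symbolicPower I ((k * m + j).toNat)).colon
        (Ideal.span {monomial ((k + 1) • a) (1 : K)})) :=
  radical_colon_symbolicPower_eq_general I hsf m k j hj1 hj2 a
end

section
/- Let I be a proper nonzero monomial ideal of S = K[x_1,…,x_n]. Then for every pair of integers s, m ≥ 1 and every vector a ∈ ℕ^n, one has √(\overline{I^s} : x^a) = √(\overline{I^{sm}} : x^{ma}). -/
open MvPolynomial

/-! An element `g` lies in the integral closure of `J ^ m` exactly when `g t ^ m` is integral
over the Rees algebra `R[J t]`. Since `u t` is integral iff `(u t) ^ m = u ^ m t ^ m` is, this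
gives `u ∈ \overline{J} ↔ u ^ m ∈ \overline{J ^ m}` for `m ≥ 1`. Now `f ^ k r ∈ \overline{J}`
yields `f ^ (k m) r ^ m ∈ \overline{J ^ m}`, and conversely `f ^ l r ^ m ∈ \overline{J ^ m}`
yields `(f ^ l r) ^ m = f ^ (l (m - 1)) · f ^ l r ^ m ∈ \overline{J ^ m}`, so the two colon
ideals have the same radical; take `J = I ^ s` and `r = xᵃ`. -/

/-- `intCl J` is by definition the span of `{f | J.IsIntegralElem f}`. -/
def Ideal.IsIntegralElem {R : Type*} [CommRing R] (J : Ideal R) (f : R) : Prop :=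
  ∃ k : ℕ, 1 ≤ k ∧ ∃ c : ℕ → R, (∀ i ∈ Finset.Icc 1 k, c i ∈ J ^ i) ∧
    f ^ k + ∑ i ∈ Finset.Icc 1 k, c i * f ^ (k - i) = 0

namespace Polynomial

variable {R : Type*} [CommRing R]

theorem _root_.Ideal.IsIntegralElem.isIntegral_monomial {J : Ideal R} {m : ℕ} {g : R}
    (hg : (J ^ m).IsIntegralElem g) : IsIntegral (reesAlgebra J) (monomial m g) := by
  obtain ⟨k, hk, c, hc, hgk⟩ := hg
  rw [← C_mul_X_pow_eq_monomial]
  set Q : R[X][X] := X ^ k + ∑ i ∈ Finset.Icc 1 k, C (monomial (m * i) (c i)) * X ^ (k - i)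
  have hQ_lifts : Q ∈ lifts (reesAlgebra J).val.toRingHom := by
    refine add_mem (X_pow_mem_lifts _ k)
      (_root_.sum_mem fun i hi => mul_mem ?_ (X_pow_mem_lifts _ _))
    have hmem : monomial (m * i) (c i) ∈ reesAlgebra J :=
      reesAlgebra.monomial_mem.2 (pow_mul J m i ▸ hc i hi)
    exact C_mem_lifts _ (⟨_, hmem⟩ : reesAlgebra J)
  have hQ_monic : Q.Monic := by
    refine monic_X_pow_add (degree_sum_le _ _ |>.trans_lt ?_)
    refine (Finset.sup_lt_iff (WithBot.bot_lt_coe k)).2 fun i hi => ?_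
    refine (degree_C_mul_X_pow_le _ _).trans_lt ?_
    have := (Finset.mem_Icc.1 hi).1
    exact Nat.cast_lt.2 (by omega)
  have hQ_eval : Q.eval (C g * X ^ m) = 0 := by
    have hterm : ∀ i ∈ Finset.Icc 1 k, monomial (m * i) (c i) * (C g * X ^ m) ^ (k - i) =
        C (c i * g ^ (k - i)) * X ^ (m * k) := by
      intro i hi
      have := (Finset.mem_Icc.1 hi).2
      rw [← C_mul_X_pow_eq_monomial, mul_pow, ← C_pow, ← pow_mul, C_mul,
        show m * k = m * i + m * (k - i) by rw [← mul_add, Nat.add_sub_cancel' this]]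
      ring
    simp only [Q, eval_add, eval_pow, eval_X, eval_finsetSum, eval_mul, eval_C]
    rw [Finset.sum_congr rfl hterm, ← Finset.sum_mul, ← map_sum, mul_pow, ← C_pow, ← pow_mul,
      ← add_mul, ← C_add, hgk, C_0, zero_mul]
  obtain ⟨q, hq_map, -, hq_monic⟩ := lifts_and_natDegree_eq_and_monic hQ_lifts hQ_monic
  exact ⟨q, hq_monic, by rw [← eval_map, ← hQ_eval, ← hq_map]; rfl⟩

/-- The equation for `g` is read off from the coefficient of `t ^ (m k)` in that of `g t ^ m`. -/
theorem _root_.Ideal.isIntegralElem_of_isIntegral_monomial {J : Ideal R} {m : ℕ} {g : R}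
    (hg : IsIntegral (reesAlgebra J) (monomial m g)) : (J ^ m).IsIntegralElem g := by
  rcases subsingleton_or_nontrivial R with hR | hR
  · exact ⟨1, le_rfl, 0, fun _ _ => zero_mem _, Subsingleton.elim _ _⟩
  obtain ⟨P, hP_monic, hP⟩ := hg
  rw [← C_mul_X_pow_eq_monomial] at hP
  set k := P.natDegree
  set c : ℕ → R := fun j => (P.coeff (k - j) : R[X]).coeff (m * j)
  have hk : 1 ≤ k := by
    by_contra! hk
    rw [(hP_monic.natDegree_eq_zero).1 (by omega), eval₂_one] at hP
    exact one_ne_zero hP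
  have hcoeff : ∑ i ∈ Finset.range (k + 1), c (k - i) * g ^ i = 0 := by
    have := congrArg (coeff · (m * k)) hP
    simp only [eval₂_eq_sum_range, finsetSum_coeff, coeff_zero] at this
    rw [← this]
    refine Finset.sum_congr rfl fun i hi => ?_
    have hik : i ≤ k := Nat.lt_succ_iff.1 (Finset.mem_range.1 hi)
    rw [mul_pow, ← C_pow, ← pow_mul, mul_left_comm, coeff_C_mul,
      show m * k = m * (k - i) + m * i by rw [← mul_add, Nat.sub_add_cancel hik], coeff_mul_X_pow]
    simp only [c, Nat.sub_sub_self hik]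
    exact mul_comm _ _
  refine ⟨k, hk, c, fun j _ => ?_, ?_⟩
  · rw [← pow_mul]
    exact (mem_reesAlgebra_iff J _).1 (P.coeff (k - j)).2 (m * j)
  · have hlead : c 0 = 1 := by
      have hPk : P.coeff k = 1 := hP_monic.coeff_natDegree
      simp only [c, Nat.sub_zero, mul_zero, hPk, OneMemClass.coe_one, coeff_one_zero]
    have hreflect : ∑ j ∈ Finset.Icc 1 k, c j * g ^ (k - j) =
        ∑ i ∈ Finset.range k, c (k - i) * g ^ i := by
      refine Finset.sum_nbij' (k - ·) (k - ·) ?_ ?_ ?_ ?_ ?_ <;>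
        intro j hj <;> simp only [Finset.mem_Icc, Finset.mem_range] at hj ⊢
      all_goals first | omega | rw [Nat.sub_sub_self hj.2]
    rw [Finset.sum_range_succ, Nat.sub_self, hlead, one_mul] at hcoeff
    rw [hreflect, add_comm, hcoeff]

end Polynomial

section IntegralClosure

variable {K : Type} [Field K] {n : ℕ}

theorem mem_intCl_pow_iff (J : Ideal (MvPolynomial (Fin n) K)) (m : ℕ)
    (g : MvPolynomial (Fin n) K) :
    g ∈ intCl (J ^ m) ↔ IsIntegral (reesAlgebra J) (Polynomial.monomial m g) := by
  refine ⟨fun hg => ?_,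
    fun hg => Ideal.subset_span (Ideal.isIntegralElem_of_isIntegral_monomial hg)⟩
  induction hg using Submodule.span_induction with
  | mem f hf => exact Ideal.IsIntegralElem.isIntegral_monomial hf
  | zero => simpa using isIntegral_zero
  | add f g _ _ hf hg => simpa using hf.add hg
  | smul a f _ hf => simpa [Polynomial.smul_monomial] using hf.smul a

theorem pow_mem_intCl_pow {J : Ideal (MvPolynomial (Fin n) K)} {g : MvPolynomial (Fin n) K}
    (hg : g ∈ intCl J) (m : ℕ) : g ^ m ∈ intCl (J ^ m) := by
  rw [← pow_one J, mem_intCl_pow_iff] at hg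
  simpa [mem_intCl_pow_iff, Polynomial.monomial_pow] using hg.pow m

theorem mem_intCl_of_pow_mem_intCl_pow {J : Ideal (MvPolynomial (Fin n) K)}
    {g : MvPolynomial (Fin n) K} {m : ℕ} (hm : 0 < m) (hg : g ^ m ∈ intCl (J ^ m)) :
    g ∈ intCl J := by
  rw [mem_intCl_pow_iff] at hg
  rw [← pow_one J, mem_intCl_pow_iff]
  exact IsIntegral.of_pow hm (by simpa [Polynomial.monomial_pow] using hg)

theorem radical_colon_intCl_eq_radical_colon_intCl_pow (J : Ideal (MvPolynomial (Fin n) K))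
    {m : ℕ} (hm : 0 < m) (r : MvPolynomial (Fin n) K) :
    ((intCl J).colon (Ideal.span {r})).radical =
      ((intCl (J ^ m)).colon (Ideal.span {r ^ m})).radical := by
  ext f
  simp only [Ideal.mem_radical_iff, Ideal.mem_colon_span_singleton]
  constructor
  · rintro ⟨k, hk⟩
    exact ⟨k * m, by simpa [pow_mul, mul_pow] using pow_mem_intCl_pow hk m⟩
  · rintro ⟨l, hl⟩
    refine ⟨l, mem_intCl_of_pow_mem_intCl_pow hm ?_⟩
    have hpow : (f ^ l * r) ^ m = f ^ (l * (m - 1)) * (f ^ l * r ^ m) := by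
      rw [mul_pow, ← pow_mul, ← mul_assoc, ← pow_add, ← mul_add_one, Nat.sub_one_add_one hm.ne']
    rw [hpow]
    exact Ideal.mul_mem_left _ _ hl

end IntegralClosure

theorem radical_colon_intCl_pow_eq_intCl_pow_general {K : Type} [Field K] {n : ℕ}
    (I : Ideal (MvPolynomial (Fin n) K))
    (s m : ℕ) (hm : 1 ≤ m) (a : Fin n →₀ ℕ) :
    Ideal.radical ((intCl (I ^ s)).colon (Ideal.span {monomial a (1 : K)})) =
      Ideal.radical ((intCl (I ^ (s * m))).colon
        (Ideal.span {monomial (m • a) (1 : K)})) := by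
  rw [pow_mul, show monomial (m • a) (1 : K) = monomial a 1 ^ m by rw [monomial_pow, one_pow]]
  exact radical_colon_intCl_eq_radical_colon_intCl_pow (I ^ s) hm _

/-- For a proper nonzero monomial ideal `I`, integers `s, m ≥ 1` and every
`a ∈ ℕ^n`, `√(\overline{I^s} : xᵃ) = √(\overline{I^{sm}} : x^{ma})`. -/
theorem radical_colon_intCl_pow_eq_intCl_pow {K : Type} [Field K] {n : ℕ}
    (I : Ideal (MvPolynomial (Fin n) K))
    (hmon : IsMonomialIdeal I) (hbot : I ≠ ⊥) (htop : I ≠ ⊤)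
    (s m : ℕ) (hs : 1 ≤ s) (hm : 1 ≤ m) (a : Fin n →₀ ℕ) :
    Ideal.radical ((intCl (I ^ s)).colon (Ideal.span {monomial a (1 : K)})) =
      Ideal.radical ((intCl (I ^ (s * m))).colon
        (Ideal.span {monomial (m • a) (1 : K)})) :=
  radical_colon_intCl_pow_eq_intCl_pow_general I s m hm a
end
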